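/- arXiv:1707.06847 — 4 statements merged into one kernel-verified Lean document; each statement's English description precedes it below -/
import Mathlib

section
/- Let X be a complex Banach space and suppose that the set Γ_s of strong peak points for A_{w*u}(B_{X*}) with respect to the norm is norm dense in S_{X*}. Then for every ε ∈ (0, 1) there exists η(ε) > 0 (one may take η(ε) = ε/4) such that whenever f ∈ A_{w*u}(B_{X*}) with ‖f‖∞ = 1 and x₀* ∈ S_{X*} satisfy |f(x₀*)| > 1 − η(ε), there exist g ∈ A_{w*u}(B_{X*}) with ‖g‖∞ = 1 and x₁* ∈ S_{X*} such that |g(x₁*)| = 1, ‖g − f‖∞ < ε and ‖x₁* − x₀*‖ < ε. -/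
/-!
Near `x₀` pick a strong peak point `z` at which `|f|` still exceeds `1 - ε/4` (density and
continuity of `f`), and a power `p` of a peak function at `z`, rotated so that `p z = 1`, with
`|p| ≤ 1/2` outside the `ε/2`-ball around `z`. Then `u = f + (ε/2) (f z / |f z|) p` satisfies
`|u z| = |f z| + ε/2 > 1 + ε/4`, while `|u| ≤ 1 + ε/4` away from `z`. By the maximum modulus
principle `|u|` attains its maximum `M ∈ (1, 1 + ε/2]` at a point `x₁` of the sphere, necessarily
within `ε/2` of `z`, and `g = u / M` is `ε`-close to `f`.
-/

open NormedSpace Metric Filter Topology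

noncomputable section

variable {X Y : Type*} [NormedAddCommGroup X] [NormedSpace ℂ X]
  [NormedAddCommGroup Y] [NormedSpace ℂ Y]

/-- Membership in `A_{w*u}(B_{X*}, Y)`: `f` is weak-*-to-norm continuous on the closed unit
ball of the dual (equivalently, weak-* uniformly continuous, as the ball is weak-* compact)
and holomorphic on the open unit ball. -/
def MemAwsu (f : StrongDual ℂ X → Y) : Prop :=
  ContinuousOn (fun φ : WeakDual ℂ X => f (WeakDual.toStrongDual φ))
      {φ : WeakDual ℂ X | ‖WeakDual.toStrongDual φ‖ ≤ 1}
    ∧ DifferentiableOn ℂ f (ball (0 : StrongDual ℂ X) 1)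

/-- The supremum norm `‖f‖_∞ = sup {‖f x*‖ : x* ∈ B_{X*}}`. -/
def supNorm (f : StrongDual ℂ X → Y) : ℝ :=
  ⨆ x : closedBall (0 : StrongDual ℂ X) 1, ‖f (x : StrongDual ℂ X)‖

/-- `x₀` is a strong peak point for `A_{w*u}(B_{X*})` with respect to the norm. -/
def IsNormStrongPeakPoint (x₀ : StrongDual ℂ X) : Prop :=
  ∃ f : StrongDual ℂ X → ℂ, MemAwsu f ∧ supNorm f = 1 ∧ ‖f x₀‖ = 1 ∧
    ∀ δ > 0, ∃ c < 1, ∀ y ∈ closedBall (0 : StrongDual ℂ X) 1, δ ≤ ‖y - x₀‖ → ‖f y‖ ≤ c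

namespace MemAwsu

variable {f g : StrongDual ℂ X → Y}

lemma continuousOn (hf : MemAwsu f) : ContinuousOn f (closedBall (0 : StrongDual ℂ X) 1) :=
  hf.1.comp NormedSpace.Dual.toWeakDual_continuous.continuousOn
    fun _ hy => mem_closedBall_zero_iff.mp hy

lemma diffContOnCl (hf : MemAwsu f) : DiffContOnCl ℂ f (ball (0 : StrongDual ℂ X) 1) :=
  ⟨hf.2, by rw [closure_ball _ one_ne_zero]; exact hf.continuousOn⟩

lemma add (hf : MemAwsu f) (hg : MemAwsu g) : MemAwsu (fun y => f y + g y) :=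
  ⟨hf.1.add hg.1, hf.2.add hg.2⟩

lemma const_smul (c : ℂ) (hf : MemAwsu f) : MemAwsu (fun y => c • f y) :=
  ⟨hf.1.const_smul c, hf.2.const_smul c⟩

lemma pow {p : StrongDual ℂ X → ℂ} (hp : MemAwsu p) (n : ℕ) : MemAwsu (fun y => p y ^ n) :=
  ⟨hp.1.pow n, hp.2.pow n⟩

lemma exists_isMaxOn_norm (hf : MemAwsu f) :
    ∃ x ∈ closedBall (0 : StrongDual ℂ X) 1,
      IsMaxOn (fun y => ‖f y‖) (closedBall (0 : StrongDual ℂ X) 1) x := by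
  have hK : IsCompact {φ : WeakDual ℂ X | ‖WeakDual.toStrongDual φ‖ ≤ 1} := by
    simpa [Set.preimage] using WeakDual.isCompact_closedBall (0 : StrongDual ℂ X) 1
  obtain ⟨φ, hφ, hmax⟩ := hK.exists_isMaxOn ⟨0, by simp⟩ hf.1.norm
  exact ⟨WeakDual.toStrongDual φ, by simpa using hφ,
    fun y hy => hmax (show ‖y‖ ≤ 1 by simpa using hy)⟩

lemma exists_mem_sphere_isMaxOn_norm (hf : MemAwsu f)
    (hS : (sphere (0 : StrongDual ℂ X) 1).Nonempty) :
    ∃ x ∈ sphere (0 : StrongDual ℂ X) 1,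
      IsMaxOn (fun y => ‖f y‖) (closedBall (0 : StrongDual ℂ X) 1) x := by
  obtain ⟨x, hx, hmax⟩ := hf.exists_isMaxOn_norm
  rcases (mem_closedBall_iff_norm.mp hx).lt_or_eq with hlt | heq
  · obtain ⟨s, hs⟩ := hS
    have hconst := Complex.norm_eqOn_closure_of_isPreconnected_of_isMaxOn
      (convex_ball (0 : StrongDual ℂ X) 1).isPreconnected isOpen_ball hf.diffContOnCl
      (mem_ball_iff_norm.mpr hlt) (hmax.on_subset ball_subset_closedBall)
    rw [closure_ball _ one_ne_zero] at hconst
    refine ⟨s, hs, fun y hy => show ‖f y‖ ≤ ‖f s‖ from ?_⟩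
    rw [show ‖f y‖ = ‖f x‖ from hconst hy, show ‖f s‖ = ‖f x‖ from
      hconst (sphere_subset_closedBall hs)]
  · exact ⟨x, by simpa using heq, hmax⟩

end MemAwsu

section SupNorm

variable {F : Type*} [NormedAddCommGroup F] {f : StrongDual ℂ X → F}

lemma supNorm_le {C : ℝ} (h : ∀ y ∈ closedBall (0 : StrongDual ℂ X) 1, ‖f y‖ ≤ C) :
    supNorm f ≤ C :=
  have : Nonempty (closedBall (0 : StrongDual ℂ X) 1) := ⟨⟨0, by simp⟩⟩
  ciSup_le fun y => h y y.2

lemma supNorm_eq_of_isMaxOn {x : StrongDual ℂ X} (hx : x ∈ closedBall (0 : StrongDual ℂ X) 1)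
    (hmax : IsMaxOn (fun y => ‖f y‖) (closedBall (0 : StrongDual ℂ X) 1) x) :
    supNorm f = ‖f x‖ :=
  le_antisymm (supNorm_le hmax) <|
    le_ciSup (f := fun y : closedBall (0 : StrongDual ℂ X) 1 => ‖f y‖)
      ⟨‖f x‖, by rintro _ ⟨y, rfl⟩; exact hmax y.2⟩ ⟨x, hx⟩

end SupNorm

lemma MemAwsu.norm_le_supNorm {f : StrongDual ℂ X → Y} (hf : MemAwsu f) {y : StrongDual ℂ X}
    (hy : y ∈ closedBall (0 : StrongDual ℂ X) 1) : ‖f y‖ ≤ supNorm f := by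
  obtain ⟨x, hx, hmax⟩ := hf.exists_isMaxOn_norm
  exact supNorm_eq_of_isMaxOn hx hmax ▸ hmax hy

lemma norm_inv_smul_sub_le {E : Type*} [SeminormedAddCommGroup E] [NormedSpace ℝ E]
    {a b : E} {M δ : ℝ} (hM : 1 ≤ M) (hb : ‖b‖ ≤ 1) (hab : ‖a - b‖ ≤ δ) :
    ‖M⁻¹ • a - b‖ ≤ (M - 1 + δ) / M := by
  have hM0 : 0 < M := one_pos.trans_le hM
  have hMinv : M⁻¹ ≤ 1 := inv_le_one_of_one_le₀ hM
  calc ‖M⁻¹ • a - b‖ = ‖M⁻¹ • (a - b) - (1 - M⁻¹) • b‖ := by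
        congr 1
        simp only [smul_sub, sub_smul, one_smul]
        abel
    _ ≤ M⁻¹ * δ + (1 - M⁻¹) * 1 := by
        refine (norm_sub_le _ _).trans (add_le_add ?_ ?_) <;>
          rw [norm_smul, Real.norm_of_nonneg (by linarith [inv_pos.mpr hM0])] <;> gcongr
    _ = (M - 1 + δ) / M := by field_simp; ring

lemma IsNormStrongPeakPoint.exists_peakFunction {z : StrongDual ℂ X}
    (hz : IsNormStrongPeakPoint z) {r κ : ℝ} (hr : 0 < r) (hκ : 0 < κ) :
    ∃ p : StrongDual ℂ X → ℂ, MemAwsu p ∧ p z = 1 ∧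
      (∀ y ∈ closedBall (0 : StrongDual ℂ X) 1, ‖p y‖ ≤ 1) ∧
      ∀ y ∈ closedBall (0 : StrongDual ℂ X) 1, r ≤ ‖y - z‖ → ‖p y‖ ≤ κ := by
  obtain ⟨q, hq, hq1, hqz, hpeak⟩ := hz
  obtain ⟨c, hc1, hc⟩ := hpeak r hr
  obtain ⟨n, hn⟩ := exists_pow_lt_of_lt_one hκ (max_lt hc1 one_pos)
  have hqz0 : q z ≠ 0 := norm_ne_zero_iff.mp (by rw [hqz]; exact one_ne_zero)
  have hnorm : ∀ y, ‖((q z)⁻¹ • q y) ^ n‖ = ‖q y‖ ^ n := fun y => by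
    rw [norm_pow, norm_smul, norm_inv, hqz, inv_one, one_mul]
  refine ⟨fun y => ((q z)⁻¹ • q y) ^ n, (hq.const_smul _).pow n,
    by simp [hqz0], fun y hy => ?_, fun y hy hyz => ?_⟩
  · rw [hnorm]
    exact pow_le_one₀ (norm_nonneg _) (hq1 ▸ hq.norm_le_supNorm hy)
  · rw [hnorm]
    exact (pow_le_pow_left₀ (norm_nonneg _) ((hc y hy hyz).trans (le_max_left c 0)) n).trans
      hn.le

lemma MemAwsu.exists_bump_at_peakPoint {f : StrongDual ℂ X → ℂ} (hf : MemAwsu f)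
    {z : StrongDual ℂ X} (hz : IsNormStrongPeakPoint z) (hfz : f z ≠ 0) {δ r : ℝ}
    (hδ : 0 < δ) (hr : 0 < r) :
    ∃ u : StrongDual ℂ X → ℂ, MemAwsu u ∧ ‖u z‖ = ‖f z‖ + δ ∧
      (∀ y ∈ closedBall (0 : StrongDual ℂ X) 1, ‖u y - f y‖ ≤ δ) ∧
      ∀ y ∈ closedBall (0 : StrongDual ℂ X) 1, r ≤ ‖y - z‖ → ‖u y - f y‖ ≤ δ / 2 := by
  obtain ⟨p, hp, hpz, hp1, hpfar⟩ := hz.exists_peakFunction hr one_half_pos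
  have hfz0 : 0 < ‖f z‖ := norm_pos_iff.mpr hfz
  set a : ℂ := (δ / ‖f z‖) • f z
  have ha : ‖a‖ = δ := by
    rw [norm_smul, Real.norm_of_nonneg (by positivity), div_mul_cancel₀ _ hfz0.ne']
  have hdiff : ∀ y, ‖(f y + a • p y) - f y‖ = δ * ‖p y‖ := fun y => by
    rw [add_sub_cancel_left, norm_smul, ha]
  refine ⟨fun y => f y + a • p y, hf.add (hp.const_smul a), ?_, fun y hy => ?_,
    fun y hy hyz => ?_⟩
  · have hu : f z + a • p z = (1 + δ / ‖f z‖) • f z := by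
      rw [hpz, smul_eq_mul, mul_one, add_smul, one_smul]
    change ‖f z + a • p z‖ = _
    rw [hu, norm_smul, Real.norm_of_nonneg (by positivity), add_mul, one_mul,
      div_mul_cancel₀ _ hfz0.ne']
  · rw [hdiff]
    nlinarith [hp1 y hy, norm_nonneg (p y)]
  · rw [hdiff]
    nlinarith [hpfar y hy hyz, norm_nonneg (p y)]

lemma MemAwsu.exists_normAttaining_near {f u : StrongDual ℂ X → ℂ} (hu : MemAwsu u)
    (hf1 : ∀ y ∈ closedBall (0 : StrongDual ℂ X) 1, ‖f y‖ ≤ 1) {δ : ℝ}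
    (huf : ∀ y ∈ closedBall (0 : StrongDual ℂ X) 1, ‖u y - f y‖ ≤ δ)
    {x : StrongDual ℂ X} (hx : x ∈ closedBall (0 : StrongDual ℂ X) 1)
    (hmax : IsMaxOn (fun y => ‖u y‖) (closedBall (0 : StrongDual ℂ X) 1) x)
    (hux : 1 < ‖u x‖) :
    ∃ g : StrongDual ℂ X → ℂ, MemAwsu g ∧ supNorm g = 1 ∧ ‖g x‖ = 1 ∧
      supNorm (fun y => g y - f y) < 2 * δ := by
  set M := ‖u x‖
  have hM0 : 0 < M := one_pos.trans hux
  have hMδ : M ≤ 1 + δ := by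
    have := norm_le_norm_add_norm_sub' (u x) (f x)
    linarith [hf1 x hx, huf x hx]
  have hg : ∀ y, ((M⁻¹ : ℝ) : ℂ) • u y = M⁻¹ • u y := fun y => Complex.coe_smul _ _
  have hgnorm : ∀ y, ‖M⁻¹ • u y‖ = M⁻¹ * ‖u y‖ := fun y => by
    rw [norm_smul, Real.norm_of_nonneg (inv_nonneg.mpr hM0.le)]
  have hgx : ‖M⁻¹ • u x‖ = 1 := by rw [hgnorm, inv_mul_cancel₀ hM0.ne']
  refine ⟨fun y => M⁻¹ • u y, by simpa only [hg] using hu.const_smul ((M⁻¹ : ℝ) : ℂ), ?_,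
    hgx, ?_⟩
  · refine (supNorm_eq_of_isMaxOn hx fun y hy => ?_).trans hgx
    change ‖M⁻¹ • u y‖ ≤ ‖M⁻¹ • u x‖
    rw [hgnorm, hgnorm]
    exact mul_le_mul_of_nonneg_left (hmax hy) (inv_nonneg.mpr hM0.le)
  · calc supNorm (fun y => M⁻¹ • u y - f y) ≤ (M - 1 + δ) / M :=
          supNorm_le fun y hy => norm_inv_smul_sub_le hux.le (hf1 y hy) (huf y hy)
      _ < 2 * δ := by
          rw [div_lt_iff₀ hM0]
          nlinarith

lemma exists_strongPeakPoint_near {F : Type*} [SeminormedAddCommGroup F]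
    (hdense : sphere (0 : StrongDual ℂ X) 1 ⊆
      closure {z : StrongDual ℂ X | ‖z‖ = 1 ∧ IsNormStrongPeakPoint z})
    {f : StrongDual ℂ X → F} (hf : ContinuousOn f (closedBall (0 : StrongDual ℂ X) 1))
    {x₀ : StrongDual ℂ X} (hx₀ : ‖x₀‖ = 1) {t r : ℝ} (ht : t < ‖f x₀‖) (hr : 0 < r) :
    ∃ z : StrongDual ℂ X, ‖z‖ = 1 ∧ IsNormStrongPeakPoint z ∧ ‖z - x₀‖ < r ∧ t < ‖f z‖ := by
  set S := {z : StrongDual ℂ X | ‖z‖ = 1 ∧ IsNormStrongPeakPoint z}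
  have hSB : S ⊆ closedBall 0 1 := fun z hz => mem_closedBall_zero_iff.mpr hz.1.le
  have := mem_closure_iff_nhdsWithin_neBot.mp (hdense (mem_sphere_zero_iff_norm.mpr hx₀))
  have hnear : ∀ᶠ y in 𝓝[S] x₀, y ∈ ball x₀ r := nhdsWithin_le_nhds (ball_mem_nhds x₀ hr)
  have hlarge : ∀ᶠ y in 𝓝[S] x₀, t < ‖f y‖ :=
    nhdsWithin_mono _ hSB <|
      (hf x₀ (mem_closedBall_zero_iff.mpr hx₀.le)).norm.eventually (lt_mem_nhds ht)
  obtain ⟨z, ⟨hz1, hzpeak⟩, hzx₀, hfz⟩ :=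
    (eventually_mem_nhdsWithin.and (hnear.and hlarge)).exists
  exact ⟨z, hz1, hzpeak, mem_ball_iff_norm.mp hzx₀, hfz⟩

theorem bpb_Awsu_general (X : Type*) [NormedAddCommGroup X] [NormedSpace ℂ X]
    (hdense : sphere (0 : StrongDual ℂ X) 1 ⊆
      closure {z : StrongDual ℂ X | ‖z‖ = 1 ∧ IsNormStrongPeakPoint z}) :
    ∀ ε ∈ Set.Ioo (0 : ℝ) 1, ∃ η > 0, η = ε / 4 ∧
      ∀ f : StrongDual ℂ X → ℂ, MemAwsu f → supNorm f = 1 →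
        ∀ x₀ : StrongDual ℂ X, ‖x₀‖ = 1 → 1 - η < ‖f x₀‖ →
          ∃ g : StrongDual ℂ X → ℂ, ∃ x₁ : StrongDual ℂ X, MemAwsu g ∧ supNorm g = 1 ∧ ‖x₁‖ = 1 ∧
            ‖g x₁‖ = 1 ∧ supNorm (fun y => g y - f y) < ε ∧ ‖x₁ - x₀‖ < ε := by
  rintro ε ⟨hε0, hε1⟩
  refine ⟨ε / 4, by positivity, rfl, fun f hf hf1 x₀ hx₀ hfx₀ => ?_⟩
  have hfle : ∀ y ∈ closedBall (0 : StrongDual ℂ X) 1, ‖f y‖ ≤ 1 :=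
    fun y hy => hf1 ▸ hf.norm_le_supNorm hy
  obtain ⟨z, hz1, hzpeak, hzx₀, hfz⟩ :=
    exists_strongPeakPoint_near hdense hf.continuousOn hx₀ hfx₀ (half_pos hε0)
  have hzB : z ∈ closedBall (0 : StrongDual ℂ X) 1 := mem_closedBall_zero_iff.mpr hz1.le
  obtain ⟨u, hu, huz, huf, hufar⟩ := hf.exists_bump_at_peakPoint hzpeak
    (norm_pos_iff.mp (by linarith)) (half_pos hε0) (half_pos hε0)
  obtain ⟨x₁, hx₁, hmax⟩ := hu.exists_mem_sphere_isMaxOn_norm ⟨z, by simpa using hz1⟩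
  have hx₁B : x₁ ∈ closedBall (0 : StrongDual ℂ X) 1 := sphere_subset_closedBall hx₁
  have hux₁ : ‖f z‖ + ε / 2 ≤ ‖u x₁‖ := huz ▸ hmax hzB
  have hx₁z : ‖x₁ - z‖ < ε / 2 := by
    by_contra! hfar
    have := norm_le_norm_add_norm_sub' (u x₁) (f x₁)
    linarith [hufar x₁ hx₁B hfar, hfle x₁ hx₁B]
  obtain ⟨g, hg, hg1, hgx₁, hgf⟩ :=
    hu.exists_normAttaining_near hfle huf hx₁B hmax (by linarith)
  refine ⟨g, x₁, hg, hg1, by simpa using hx₁, hgx₁, by linarith, ?_⟩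
  calc ‖x₁ - x₀‖ ≤ ‖x₁ - z‖ + ‖z - x₀‖ := norm_sub_le_norm_sub_add_norm_sub _ _ _
    _ < ε := by linarith

/-- Bishop-Phelps-Bollobás theorem for `A_{w*u}(B_{X*})`. -/
theorem bpb_Awsu (X : Type*) [NormedAddCommGroup X] [NormedSpace ℂ X] [CompleteSpace X]
    (hdense : sphere (0 : StrongDual ℂ X) 1 ⊆
      closure {z : StrongDual ℂ X | ‖z‖ = 1 ∧ IsNormStrongPeakPoint z}) :
    ∀ ε ∈ Set.Ioo (0 : ℝ) 1, ∃ η > 0, η = ε / 4 ∧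
      ∀ f : StrongDual ℂ X → ℂ, MemAwsu f → supNorm f = 1 →
        ∀ x₀ : StrongDual ℂ X, ‖x₀‖ = 1 → 1 - η < ‖f x₀‖ →
          ∃ g : StrongDual ℂ X → ℂ, ∃ x₁ : StrongDual ℂ X, MemAwsu g ∧ supNorm g = 1 ∧ ‖x₁‖ = 1 ∧
            ‖g x₁‖ = 1 ∧ supNorm (fun y => g y - f y) < ε ∧ ‖x₁ - x₀‖ < ε :=
  bpb_Awsu_general X hdense
end
end

section
/- Let K be a nonempty compact Hausdorff space and let A be a unital uniform algebra on K, i.e. a closed subalgebra of C(K, ℂ) containing the constant functions, and let Γ₀ denote the set of strong peak points of A. Then for any open subset U of K with U ∩ Γ₀ ≠ ∅ and for any 0 < ε < 1, there exist f ∈ A and t₀ ∈ U ∩ Γ₀ satisfying: (i) f(t₀) = ‖f‖∞ = 1; (ii) |f(t)| < ε for every t ∈ K \ U; and (iii) |f(t)| + (1 − ε)|1 − f(t)| ≤ 1 for every t ∈ K. -/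
open Metric

noncomputable section

variable {K : Type*} [TopologicalSpace K] [CompactSpace K]

/-- `t` is a strong peak point of the uniform algebra `A ⊆ C(K, ℂ)`: some `f ∈ A` with
`‖f‖∞ = |f t| = 1` peaks strongly at `t`, i.e. its modulus stays bounded away from `1`
off any open neighborhood of `t`. -/
def IsStrongPeakPt (A : Subalgebra ℂ C(K, ℂ)) (t : K) : Prop :=
  ∃ f ∈ A, ‖f‖ = 1 ∧ ‖f t‖ = 1 ∧
    ∀ W : Set K, IsOpen W → t ∈ W → ∃ c < 1, ∀ s ∉ W, ‖f s‖ ≤ c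

/-!
Rotate a function peaking at some `t₀ ∈ U` so that `g t₀ = 1`; then `‖g‖ = 1` and `‖g t‖ ≤ c < 1`
off `U`. The map `φ z = 1 - ε ((1 - z) / 2) ^ α` with `α = 2√ε/π` is holomorphic on the open
unit disc and continuous on the closed one, so `φ ∘ g ∈ A`: it is the uniform limit of
`φ ∘ (r • g)`, `r < 1`, and each of these is the uniform limit of Taylor polynomials of `φ`
evaluated at `g`. The map `φ` fixes `1`, sends the closed disc into the Stolz-type region
`S = {w | ‖w‖ + (1 - ε) ‖1 - w‖ ≤ 1}` and the disc of radius `c` into a disc of radius `ρ < 1`.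
Since `S` is closed under multiplication, `f = (φ ∘ g) ^ n` with `ρ ^ n < ε` does the job.
-/

open Filter Real

theorem IsStrongPeakPt.exists_apply_eq_one {A : Subalgebra ℂ C(K, ℂ)} {t : K}
    (h : IsStrongPeakPt A t) :
    ∃ g ∈ A, ‖g‖ = 1 ∧ g t = 1 ∧
      ∀ W : Set K, IsOpen W → t ∈ W → ∃ c < 1, ∀ s ∉ W, ‖g s‖ ≤ c := by
  obtain ⟨f, hfA, hf, hft, hpeak⟩ := h
  have hconj : ‖starRingEnd ℂ (f t)‖ = 1 := by rw [Complex.norm_conj, hft]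
  refine ⟨starRingEnd ℂ (f t) • f, A.smul_mem hfA _, by rw [norm_smul, hconj, hf, one_mul],
    by simp [Complex.conj_mul', hft], fun W hW htW => ?_⟩
  obtain ⟨c, hc, hfc⟩ := hpeak W hW htW
  exact ⟨c, hc, fun s hs => by simpa [hft] using hfc s hs⟩

section HolomorphicComp

variable {A : Subalgebra ℂ C(K, ℂ)} {φ : ℂ → ℂ} {g : C(K, ℂ)}

theorem exists_mem_apply_eq_of_differentiableOn (hA : IsClosed (A : Set C(K, ℂ))) {R : ℝ}
    (hφ : DifferentiableOn ℂ φ (ball 0 R)) (hg : g ∈ A) (hgR : ‖g‖ < R) :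
    ∃ h ∈ A, ∀ t, h t = φ (g t) := by
  obtain ⟨r, hgr, hrR⟩ := exists_between hgR
  obtain ⟨r', hrr', hr'R⟩ := exists_between hrR
  have hr : 0 < r := (norm_nonneg g).trans_lt hgr
  have hr' : 0 < r' := hr.trans hrr'
  set p := cauchyPowerSeries φ 0 r'.toNNReal
  have hps : HasFPowerSeriesOnBall φ p 0 r'.toNNReal :=
    (hφ.mono (closedBall_subset_ball (by simpa [hr'.le] using hr'R))).hasFPowerSeriesOnBall
      (by simpa using hr')
  have hg_mem (t : K) : g t ∈ ball (0 : ℂ) r :=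
    mem_ball_zero_iff.2 ((g.norm_coe_le_norm t).trans_lt hgr)
  have hunif : TendstoUniformlyOn (fun n => p.partialSum n ∘ g) ((fun y => φ (0 + y)) ∘ g)
      atTop Set.univ :=
    ((hps.tendstoUniformlyOn (r' := r.toNNReal) (by simpa [hr'] using hrr')).comp g).mono
      fun t _ => by simpa [hr.le] using hg_mem t
  have hsum (n : ℕ) (t : K) :
      (∑ k ∈ Finset.range n, p.coeff k • g ^ k) t = p.partialSum n (g t) := by
    simp [FormalMultilinearSeries.partialSum, mul_comm]
  let h : C(K, ℂ) := ⟨fun t => φ (g t),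
    hφ.continuousOn.comp_continuous g.continuous fun t => ball_subset_ball hrR.le (hg_mem t)⟩
  refine ⟨h, hA.mem_of_tendsto (b := atTop)
    (f := fun n => ∑ k ∈ Finset.range n, p.coeff k • g ^ k) ?_
    (Eventually.of_forall fun n => A.sum_mem fun k _ => A.smul_mem (pow_mem hg k) _),
    fun _ => rfl⟩
  rw [ContinuousMap.tendsto_iff_tendstoUniformly, ← tendstoUniformlyOn_univ]
  convert hunif using 2 with n
  · exact funext (hsum n)
  · exact funext fun t => by simp [h]

theorem exists_mem_apply_eq_of_diffContOnCl (hA : IsClosed (A : Set C(K, ℂ)))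
    (hφ : DiffContOnCl ℂ φ (ball 0 1)) (hg : g ∈ A) (hg1 : ‖g‖ ≤ 1) :
    ∃ h ∈ A, ∀ t, h t = φ (g t) := by
  have hφc := hφ.continuousOn_ball
  have hg_mem (t : K) : g t ∈ closedBall (0 : ℂ) 1 :=
    mem_closedBall_zero_iff.2 ((g.norm_coe_le_norm t).trans hg1)
  let h : C(K, ℂ) := ⟨fun t => φ (g t), hφc.comp_continuous g.continuous hg_mem⟩
  refine ⟨h, hA.closure_subset (Metric.mem_closure_iff.2 fun δ hδ => ?_), fun _ => rfl⟩
  obtain ⟨η, hη, hφη⟩ := uniformContinuousOn_iff_le.1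
    ((isCompact_closedBall 0 1).uniformContinuousOn_of_continuous hφc) (δ / 2) (half_pos hδ)
  obtain ⟨r, hr, hr1⟩ := exists_between (max_lt (sub_lt_self 1 hη) zero_lt_one)
  obtain ⟨hrη, hr0⟩ := max_lt_iff.1 hr
  have hnorm_r : ‖(r : ℂ)‖ = r := by rw [Complex.norm_real, norm_of_nonneg hr0.le]
  have hrg : ‖(r : ℂ) • g‖ < 1 := by
    rw [norm_smul, hnorm_r]
    nlinarith [norm_nonneg g]
  obtain ⟨b, hbA, hb⟩ :=
    exists_mem_apply_eq_of_differentiableOn hA hφ.differentiableOn (A.smul_mem hg _) hrg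
  refine ⟨b, hbA, ((ContinuousMap.dist_le (half_pos hδ).le).2 fun t => ?_).trans_lt
    (half_lt_self hδ)⟩
  have hgt := mem_closedBall_zero_iff.1 (hg_mem t)
  rw [hb]
  refine hφη _ (hg_mem t) _ ?_ ?_
  · rw [ContinuousMap.smul_apply, mem_closedBall_zero_iff, norm_smul, hnorm_r]
    exact mul_le_one₀ hr1.le (norm_nonneg _) hgt
  · rw [ContinuousMap.smul_apply, smul_eq_mul, dist_eq_norm, ← one_sub_mul, norm_mul,
      ← Complex.ofReal_one, ← Complex.ofReal_sub, Complex.norm_real,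
      norm_of_nonneg (sub_nonneg.2 hr1.le)]
    nlinarith [norm_nonneg (g t)]

end HolomorphicComp

def stolzRegion (ε : ℝ) : Set ℂ := {w | ‖w‖ + (1 - ε) * ‖1 - w‖ ≤ 1}

section StolzRegion

variable {ε : ℝ}

theorem one_mem_stolzRegion : (1 : ℂ) ∈ stolzRegion ε := by
  simp [stolzRegion]

theorem mul_mem_stolzRegion (hε : ε ≤ 1) {v w : ℂ} (hv : v ∈ stolzRegion ε)
    (hw : w ∈ stolzRegion ε) : v * w ∈ stolzRegion ε := by
  simp only [stolzRegion, Set.mem_ofPred_eq] at hv hw ⊢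
  have hsplit : ‖1 - v * w‖ ≤ ‖1 - v‖ + ‖v‖ * ‖1 - w‖ := by
    rw [← norm_mul, show 1 - v * w = (1 - v) + v * (1 - w) by ring]
    exact norm_add_le _ _
  have := mul_le_mul_of_nonneg_left hsplit (sub_nonneg.2 hε)
  have := mul_le_mul_of_nonneg_left hw (norm_nonneg v)
  rw [norm_mul]
  nlinarith

theorem pow_mem_stolzRegion (hε : ε ≤ 1) {w : ℂ} (hw : w ∈ stolzRegion ε) (n : ℕ) :
    w ^ n ∈ stolzRegion ε := by
  induction n with
  | zero => simpa using one_mem_stolzRegion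
  | succ n ih => simpa [pow_succ] using mul_mem_stolzRegion hε ih hw

theorem norm_le_one_of_mem_stolzRegion (hε : ε ≤ 1) {w : ℂ} (hw : w ∈ stolzRegion ε) :
    ‖w‖ ≤ 1 :=
  le_of_add_le_of_nonneg_left hw (mul_nonneg (sub_nonneg.2 hε) (norm_nonneg _))

theorem norm_one_sub_sq_le {w : ℂ} (hre : (1 - ε / 2) * ‖w‖ ≤ w.re) :
    ‖1 - w‖ ^ 2 ≤ 1 - (2 - ε) * ‖w‖ + ‖w‖ ^ 2 := by
  have : ‖1 - w‖ ^ 2 = 1 - 2 * w.re + ‖w‖ ^ 2 := by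
    rw [norm_sub_sq_real]
    simp [Complex.inner]
  linarith

theorem one_sub_mem_stolzRegion (hε : ε ≤ 1) {w : ℂ} (hw : ‖w‖ ≤ ε)
    (hre : (1 - ε / 2) * ‖w‖ ≤ w.re) : 1 - w ∈ stolzRegion ε := by
  have hw0 := norm_nonneg w
  have hsq : ‖1 - w‖ ^ 2 ≤ (1 - (1 - ε) * ‖w‖) ^ 2 := by
    have h : 0 ≤ 1 - (2 - ε) * ‖w‖ := by nlinarith [sq_nonneg (1 - ε)]
    nlinarith [norm_one_sub_sq_le hre, mul_nonneg (mul_nonneg (hw0.trans hw) hw0) h]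
  have := (pow_le_pow_iff_left₀ (norm_nonneg _) (by nlinarith) two_ne_zero).1 hsq
  simp only [stolzRegion, Set.mem_ofPred_eq, sub_sub_cancel]
  linarith

end StolzRegion

theorem Complex.mul_norm_cpow_le_re_cpow {b : ℂ} (hb : 0 ≤ b.re) (α : ℝ) :
    (1 - (α * (π / 2)) ^ 2 / 2) * ‖b ^ (α : ℂ)‖ ≤ (b ^ (α : ℂ)).re := by
  rw [cpow_ofReal_re, norm_cpow_real, mul_comm]
  refine mul_le_mul_of_nonneg_left ?_ (rpow_nonneg (norm_nonneg b) α)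
  obtain ⟨harg₁, harg₂⟩ := abs_le.1 (abs_arg_le_pi_div_two_iff.2 hb)
  have : (arg b * α) ^ 2 ≤ (α * (π / 2)) ^ 2 := by
    rw [mul_pow, mul_pow, mul_comm]
    exact mul_le_mul_of_nonneg_left (sq_le_sq' harg₁ harg₂) (sq_nonneg α)
  linarith [one_sub_sq_div_two_le_cos (x := arg b * α)]

/-- The exponent `2√ε/π` confines `((1 - z) / 2) ^ (2√ε/π)`, `‖z‖ ≤ 1`, to the sector
`|arg| ≤ √ε`, where `re ≥ (1 - ε/2) ‖·‖`. -/
def stolzMap (ε : ℝ) (z : ℂ) : ℂ := 1 - ε * ((1 - z) / 2) ^ ((2 * √ε / π : ℝ) : ℂ)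

section StolzMap

variable {ε : ℝ}

theorem re_one_sub_div_two_nonneg {z : ℂ} (hz : ‖z‖ ≤ 1) : 0 ≤ ((1 - z) / 2).re := by
  have := (Complex.re_le_norm z).trans hz
  simp only [Complex.div_ofNat_re, Complex.sub_re, Complex.one_re]
  linarith

theorem stolzMap_one (hε : 0 < ε) : stolzMap ε 1 = 1 := by
  simp [stolzMap, (sqrt_pos.2 hε).ne']

theorem diffContOnCl_stolzMap (hε : 0 < ε) : DiffContOnCl ℂ (stolzMap ε) (ball 0 1) := by
  refine .mk_ball (fun z hz => ?_) (fun z hz => ?_)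
  · have hz : ‖z‖ < 1 := mem_ball_zero_iff.1 hz
    have hre : 0 < ((1 - z) / 2).re := by
      have := (Complex.re_le_norm z).trans_lt hz
      simp only [Complex.div_ofNat_re, Complex.sub_re, Complex.one_re]
      linarith
    exact ((differentiableAt_const _).sub ((differentiableAt_const _).mul
      ((((differentiableAt_const _).sub differentiableAt_id).div_const _).cpow_const
        (Or.inl hre)))).differentiableWithinAt
  · have hcpow : ContinuousAt (fun z : ℂ => ((1 - z) / 2) ^ ((2 * √ε / π : ℝ) : ℂ)) z :=
      (Complex.continuousAt_cpow_const_of_re_pos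
        (Or.inl (re_one_sub_div_two_nonneg (mem_closedBall_zero_iff.1 hz)))
        (by simp only [Complex.ofReal_re]; positivity)).comp (f := fun z : ℂ => (1 - z) / 2)
        (by fun_prop)
    exact (continuousAt_const.sub (continuousAt_const.mul hcpow)).continuousWithinAt

theorem one_sub_stolzMap (ε : ℝ) (z : ℂ) :
    1 - stolzMap ε z = ε * ((1 - z) / 2) ^ ((2 * √ε / π : ℝ) : ℂ) := by
  rw [stolzMap, sub_sub_cancel]

theorem norm_one_sub_stolzMap (hε : 0 ≤ ε) (z : ℂ) :
    ‖1 - stolzMap ε z‖ = ε * ‖(1 - z) / 2‖ ^ (2 * √ε / π) := by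
  rw [one_sub_stolzMap, norm_mul, Complex.norm_real, norm_of_nonneg hε, Complex.norm_cpow_real]

theorem norm_one_sub_stolzMap_le (hε : 0 ≤ ε) {z : ℂ} (hz : ‖z‖ ≤ 1) :
    ‖1 - stolzMap ε z‖ ≤ ε := by
  have hb : ‖(1 - z) / 2‖ ≤ 1 := by
    rw [norm_div, Complex.norm_two, div_le_one two_pos]
    linarith [norm_sub_le 1 z, norm_one (α := ℂ)]
  rw [norm_one_sub_stolzMap hε]
  exact mul_le_of_le_one_right hε (rpow_le_one (norm_nonneg _) hb (by positivity))

theorem re_one_sub_stolzMap_ge (hε : 0 ≤ ε) {z : ℂ} (hz : ‖z‖ ≤ 1) :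
    (1 - ε / 2) * ‖1 - stolzMap ε z‖ ≤ (1 - stolzMap ε z).re := by
  have := Complex.mul_norm_cpow_le_re_cpow (re_one_sub_div_two_nonneg hz) (2 * √ε / π)
  rw [show 2 * √ε / π * (π / 2) = √ε by field_simp, sq_sqrt hε] at this
  rw [one_sub_stolzMap, norm_mul, Complex.re_ofReal_mul, Complex.norm_real, norm_of_nonneg hε]
  nlinarith

theorem stolzMap_mem_stolzRegion (hε0 : 0 ≤ ε) (hε1 : ε ≤ 1) {z : ℂ} (hz : ‖z‖ ≤ 1) :
    stolzMap ε z ∈ stolzRegion ε := by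
  simpa using one_sub_mem_stolzRegion hε1 (norm_one_sub_stolzMap_le hε0 hz)
    (re_one_sub_stolzMap_ge hε0 hz)

theorem exists_norm_stolzMap_le (hε0 : 0 < ε) (hε1 : ε < 1) {c : ℝ} (hc : c < 1) :
    ∃ ρ < 1, ∀ z : ℂ, ‖z‖ ≤ c → ‖stolzMap ε z‖ ≤ ρ := by
  set η := ε * ((1 - c) / 2) ^ (2 * √ε / π)
  have hη : 0 < η := mul_pos hε0 (rpow_pos_of_pos (by linarith) _)
  refine ⟨√(1 - 2 * (1 - ε) * η), (sqrt_lt' one_pos).2 (by nlinarith), fun z hz => ?_⟩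
  have hz1 : ‖z‖ ≤ 1 := hz.trans hc.le
  have hwε := norm_one_sub_stolzMap_le hε0.le hz1
  have hηw : η ≤ ‖1 - stolzMap ε z‖ := by
    rw [norm_one_sub_stolzMap hε0.le]
    refine mul_le_mul_of_nonneg_left (rpow_le_rpow (by linarith) ?_ (by positivity)) hε0.le
    rw [norm_div, Complex.norm_two]
    linarith [norm_sub_norm_le (1 : ℂ) z, norm_one (α := ℂ)]
  have := norm_one_sub_sq_le (re_one_sub_stolzMap_ge hε0.le hz1)
  rw [sub_sub_cancel] at this
  exact le_sqrt_of_sq_le (by nlinarith)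

end StolzMap

theorem urysohn_uniform_algebra_general (K : Type*) [TopologicalSpace K] [CompactSpace K]
    (A : Subalgebra ℂ C(K, ℂ)) (hA : IsClosed (A : Set C(K, ℂ)))
    (U : Set K) (hU : IsOpen U) (hUΓ : ∃ t ∈ U, IsStrongPeakPt A t)
    (ε : ℝ) (hε0 : 0 < ε) (hε1 : ε < 1) :
    ∃ f ∈ A, ∃ t₀ ∈ U, IsStrongPeakPt A t₀ ∧
      f t₀ = 1 ∧ ‖f‖ = 1 ∧
      (∀ t ∉ U, ‖f t‖ < ε) ∧
      (∀ t : K, ‖f t‖ + (1 - ε) * ‖1 - f t‖ ≤ 1) := by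
  obtain ⟨t₀, ht₀U, ht₀⟩ := hUΓ
  obtain ⟨g, hgA, hg, hgt₀, hg_peak⟩ := ht₀.exists_apply_eq_one
  obtain ⟨c, hc, hgc⟩ := hg_peak U hU ht₀U
  obtain ⟨ρ, hρ, hρc⟩ := exists_norm_stolzMap_le hε0 hε1 hc
  obtain ⟨n, hn⟩ := exists_pow_lt_of_lt_one hε0 hρ
  obtain ⟨u, huA, hu⟩ :=
    exists_mem_apply_eq_of_diffContOnCl hA (diffContOnCl_stolzMap hε0) hgA hg.le
  have hu_mem (t : K) : u t ∈ stolzRegion ε := hu t ▸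
    stolzMap_mem_stolzRegion hε0.le hε1.le ((g.norm_coe_le_norm t).trans hg.le)
  have hut₀ : (u ^ n) t₀ = 1 := by simp [hu, hgt₀, stolzMap_one hε0]
  refine ⟨u ^ n, pow_mem huA n, t₀, ht₀U, ht₀, hut₀, ?_, fun t ht => ?_,
    fun t => pow_mem_stolzRegion hε1.le (hu_mem t) n⟩
  · refine le_antisymm ((ContinuousMap.norm_le _ zero_le_one).2 fun t => ?_) ?_
    · exact norm_le_one_of_mem_stolzRegion hε1.le (pow_mem_stolzRegion hε1.le (hu_mem t) n)
    · simpa [hut₀] using (u ^ n).norm_coe_le_norm t₀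
  · calc ‖(u ^ n) t‖ = ‖u t‖ ^ n := by rw [ContinuousMap.pow_apply, norm_pow]
      _ ≤ ρ ^ n := pow_le_pow_left₀ (norm_nonneg _) (hu t ▸ hρc _ (hgc t ht)) n
      _ < ε := hn

/-- Urysohn-type lemma for unital uniform algebras (Lemma 2.7 of Cascales-Guirao-Kadets). -/
theorem urysohn_uniform_algebra (K : Type*) [TopologicalSpace K] [CompactSpace K]
    [T2Space K] [Nonempty K]
    (A : Subalgebra ℂ C(K, ℂ)) (hA : IsClosed (A : Set C(K, ℂ)))
    (U : Set K) (hU : IsOpen U) (hUΓ : ∃ t ∈ U, IsStrongPeakPt A t)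
    (ε : ℝ) (hε0 : 0 < ε) (hε1 : ε < 1) :
    ∃ f ∈ A, ∃ t₀ ∈ U, IsStrongPeakPt A t₀ ∧
      f t₀ = 1 ∧ ‖f‖ = 1 ∧
      (∀ t ∉ U, ‖f t‖ < ε) ∧
      (∀ t : K, ‖f t‖ + (1 - ε) * ‖1 - f t‖ ≤ 1) :=
  urysohn_uniform_algebra_general K A hA U hU hUΓ ε hε0 hε1
end
end

section
/- Let X be a complex Banach space. If x₀* ∈ B_{X*} is a weak-*-strongly exposed point, then x₀* is a strong peak point for A_{w*u}(B_{X*}) with respect to the norm. -/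
/-!
If `x ∈ S_X` strongly exposes `x₀*`, the affine function `y* ↦ (1 + y*(x)) / 2` is weak-*
continuous and holomorphic, bounded by `1` on `B_{X*}`, and equals `1` in modulus at `x₀*`.
Since `|1 + z|² ≤ 2 (1 + Re z)` for `|z| ≤ 1`, its modulus is bounded away from `1` on every
slice complement `{Re y*(x) ≤ 1 - ε}`; and by the shrinking diameters of the slices, every
`y*` at distance `≥ δ` from `x₀*` lies in such a complement.
-/

open NormedSpace Metric Filter Topology

noncomputable section

variable {X Y : Type*} [NormedAddCommGroup X] [NormedSpace ℂ X]
  [NormedAddCommGroup Y] [NormedSpace ℂ Y]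

/-- `x₀` is a weak-*-strongly exposed point of `B_{X*}`: some norm-one `x ∈ X` exposes it,
with the diameters of the slices `S(x, δ)` tending to `0` as `δ → 0⁺`. -/
def IsWStarStronglyExposed (x₀ : StrongDual ℂ X) : Prop :=
  ∃ x : X, ‖x‖ = 1 ∧ (x₀ x).re = 1 ∧
    Tendsto (fun δ : ℝ =>
        diam {y : StrongDual ℂ X | y ∈ closedBall (0 : StrongDual ℂ X) 1 ∧ 1 - δ < (y x).re})
      (𝓝[>] (0 : ℝ)) (𝓝 0)

theorem Complex.norm_one_add_sq_le {z : ℂ} (hz : ‖z‖ ≤ 1) : ‖1 + z‖ ^ 2 ≤ 2 * (1 + z.re) := by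
  have hnormSq : Complex.normSq z ≤ 1 := by
    rw [← Complex.sq_norm]
    exact pow_le_one₀ (norm_nonneg z) hz
  rw [Complex.sq_norm, Complex.normSq_add]
  simp only [Complex.normSq_one, one_mul, Complex.conj_re]
  linarith

theorem exists_le_one_sub_of_le_dist_of_tendsto_diam {E : Type*} [PseudoMetricSpace E]
    {K : Set E} (hK : Bornology.IsBounded K) {g : E → ℝ} {x₀ : E} (hx₀ : x₀ ∈ K)
    (hgx₀ : g x₀ = 1)
    (hdiam : Tendsto (fun ε : ℝ => diam {y | y ∈ K ∧ 1 - ε < g y}) (𝓝[>] 0) (𝓝 0))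
    {δ : ℝ} (hδ : 0 < δ) :
    ∃ ε > 0, ∀ y ∈ K, δ ≤ dist y x₀ → g y ≤ 1 - ε := by
  obtain ⟨ε, hdiam_lt, hε⟩ :=
    ((hdiam.eventually_lt_const hδ).and self_mem_nhdsWithin).exists
  refine ⟨ε, hε, fun y hy hδy => le_of_not_gt fun hgy => ?_⟩
  have hx₀_mem : x₀ ∈ {y | y ∈ K ∧ 1 - ε < g y} := ⟨hx₀, by rw [hgx₀]; linarith⟩
  have hy_mem : y ∈ {y | y ∈ K ∧ 1 - ε < g y} := ⟨hy, hgy⟩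
  have := dist_le_diam_of_mem (hK.subset fun _ h => h.1) hy_mem hx₀_mem
  linarith

theorem supNorm_eq_one_of_norm_le_one {Z : Type*} [NormedAddCommGroup Z]
    {f : StrongDual ℂ X → Z} (hle : ∀ y ∈ closedBall (0 : StrongDual ℂ X) 1, ‖f y‖ ≤ 1)
    {x₀ : StrongDual ℂ X} (hx₀ : x₀ ∈ closedBall (0 : StrongDual ℂ X) 1) (hfx₀ : ‖f x₀‖ = 1) :
    supNorm f = 1 :=
  have : Nonempty (closedBall (0 : StrongDual ℂ X) 1) := ⟨⟨x₀, hx₀⟩⟩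
  have hbdd : BddAbove (Set.range fun y : closedBall (0 : StrongDual ℂ X) 1 => ‖f y‖) :=
    ⟨1, by rintro _ ⟨y, rfl⟩; exact hle y y.2⟩
  le_antisymm (ciSup_le fun y => hle y y.2) (hfx₀ ▸ le_ciSup hbdd ⟨x₀, hx₀⟩)

def peakFunction (x : X) (y : StrongDual ℂ X) : ℂ := (1 + y x) / 2

theorem memAwsu_peakFunction (x : X) : MemAwsu (peakFunction x) := by
  constructor
  · exact ((continuous_const.add (WeakDual.eval_continuous x)).div_const 2).continuousOn
  · unfold peakFunction
    fun_prop

section peakFunction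

variable {x : X} (hx : ‖x‖ ≤ 1) {y : StrongDual ℂ X} (hy : ‖y‖ ≤ 1)
include hx hy

theorem norm_peakFunction_le_one : ‖peakFunction x y‖ ≤ 1 := by
  have : ‖y x‖ ≤ 1 := by simpa using y.le_of_opNorm_le_of_le hy hx
  rw [peakFunction, norm_div, Complex.norm_two, div_le_one two_pos]
  linarith [norm_add_le 1 (y x), norm_one (α := ℂ)]

theorem norm_peakFunction_eq_one (hyx : (y x).re = 1) : ‖peakFunction x y‖ = 1 := by
  refine le_antisymm (norm_peakFunction_le_one hx hy) ?_
  have := Complex.re_le_norm (1 + y x)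
  rw [peakFunction, norm_div, Complex.norm_two]
  simp only [Complex.add_re, Complex.one_re, hyx] at this
  linarith

theorem norm_peakFunction_sq_le : ‖peakFunction x y‖ ^ 2 ≤ (1 + (y x).re) / 2 := by
  have := Complex.norm_one_add_sq_le (by simpa using y.le_of_opNorm_le_of_le hy hx)
  rw [peakFunction, norm_div, Complex.norm_two]
  linarith

theorem norm_peakFunction_le_sqrt {ε : ℝ} (hyx : (y x).re ≤ 1 - ε) :
    ‖peakFunction x y‖ ≤ √(1 - ε / 2) :=
  Real.le_sqrt_of_sq_le (by linarith [norm_peakFunction_sq_le hx hy])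

end peakFunction

theorem wstar_strongly_exposed_is_norm_strong_peak_general
    (X : Type*) [NormedAddCommGroup X] [NormedSpace ℂ X]
    (x₀ : StrongDual ℂ X) (hx₀ : x₀ ∈ closedBall (0 : StrongDual ℂ X) 1)
    (hexp : IsWStarStronglyExposed x₀) :
    IsNormStrongPeakPoint x₀ := by
  obtain ⟨x, hx, hx₀x, hdiam⟩ := hexp
  have hpeak_le : ∀ y ∈ closedBall (0 : StrongDual ℂ X) 1, ‖peakFunction x y‖ ≤ 1 :=
    fun y hy => norm_peakFunction_le_one hx.le (mem_closedBall_zero_iff.mp hy)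
  have hpeak_x₀ := norm_peakFunction_eq_one hx.le (mem_closedBall_zero_iff.mp hx₀) hx₀x
  refine ⟨peakFunction x, memAwsu_peakFunction x,
    supNorm_eq_one_of_norm_le_one hpeak_le hx₀ hpeak_x₀, hpeak_x₀, fun δ hδ => ?_⟩
  obtain ⟨ε, hε, hslice⟩ := exists_le_one_sub_of_le_dist_of_tendsto_diam isBounded_closedBall
    hx₀ (g := fun y : StrongDual ℂ X => (y x).re) hx₀x hdiam hδ
  refine ⟨√(1 - ε / 2), (Real.sqrt_lt' one_pos).mpr (by linarith), fun y hy hδy => ?_⟩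
  exact norm_peakFunction_le_sqrt hx.le (mem_closedBall_zero_iff.mp hy)
    (hslice y hy (by rwa [dist_eq_norm]))

/-- A weak-*-strongly exposed point of `B_{X*}` is a strong peak point for
`A_{w*u}(B_{X*})` with respect to the norm. -/
theorem wstar_strongly_exposed_is_norm_strong_peak
    (X : Type*) [NormedAddCommGroup X] [NormedSpace ℂ X] [CompleteSpace X]
    (x₀ : StrongDual ℂ X) (hx₀ : x₀ ∈ closedBall (0 : StrongDual ℂ X) 1)
    (hexp : IsWStarStronglyExposed x₀) :
    IsNormStrongPeakPoint x₀ :=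
  wstar_strongly_exposed_is_norm_strong_peak_general X x₀ hx₀ hexp
end
end

section
/- Let X be a complex Banach space, x₀ ∈ S_X and x₀* ∈ S_{X*} with Re x₀*(x₀) = 1, and suppose that for every sequence {xₙ*} ⊆ B_{X*} with Re xₙ*(x₀) → 1 one has ‖xₙ* − x₀*‖ → 0 (i.e. x₀ weak-*-strongly exposes x₀*). Then the function f : B_{X*} → ℂ defined by f(x*) = (1 + x*(x₀))/2 belongs to A_{w*u}(B_{X*}), satisfies ‖f‖∞ = f(x₀*) = 1, and is a strong peak function at x₀* with respect to the norm: every sequence {xₙ*} ⊆ B_{X*} with |f(xₙ*)| → 1 satisfies ‖xₙ* − x₀*‖ → 0. -/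
/-! Since `‖x₀‖ = 1`, every `x*` in the dual ball has `|x*(x₀)| ≤ 1`, so `|f| ≤ 1` and `Re x₀*(x₀) = 1`
forces `x₀*(x₀) = 1`. On the closed unit disc `|(1 + z)/2|² ≤ (1 + Re z)/2`, so `|f(xₙ*)| → 1`
gives `Re xₙ*(x₀) → 1`, and strong exposure yields `xₙ* → x₀*` in norm. -/

open NormedSpace Metric Filter Topology

noncomputable section

variable {X Y : Type*} [NormedAddCommGroup X] [NormedSpace ℂ X]
  [NormedAddCommGroup Y] [NormedSpace ℂ Y]

theorem Complex.eq_one_of_norm_le_one_of_re_eq_one {z : ℂ} (hz : ‖z‖ ≤ 1) (hre : z.re = 1) :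
    z = 1 := by
  have hnorm : z.re = ‖z‖ := le_antisymm (Complex.re_le_norm z) (hre ▸ hz)
  have him : z.im = 0 := (Complex.nonneg_iff.mp (Complex.re_eq_norm.mp hnorm)).2.symm
  exact Complex.ext (by simpa using hre) (by simpa using him)

theorem Complex.norm_one_add_div_two_le_one {z : ℂ} (hz : ‖z‖ ≤ 1) : ‖(1 + z) / 2‖ ≤ 1 := by
  rw [norm_div, Complex.norm_two, div_le_one two_pos]
  linarith [norm_add_le 1 z, norm_one (α := ℂ)]

/-- On the closed unit disc, `Re z` is squeezed between `2 ‖(1 + z) / 2‖² - 1` and `1`. -/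
theorem Complex.tendsto_re_of_tendsto_norm_one_add_div_two {ι : Type*} {l : Filter ι}
    {z : ι → ℂ} (hz : ∀ i, ‖z i‖ ≤ 1)
    (h : Tendsto (fun i => ‖(1 + z i) / 2‖) l (𝓝 1)) :
    Tendsto (fun i => (z i).re) l (𝓝 1) := by
  have hlower : ∀ i, 2 * ‖(1 + z i) / 2‖ ^ 2 - 1 ≤ (z i).re := fun i => by
    have := Complex.norm_one_add_sq_le (hz i)
    rw [norm_div, Complex.norm_two]
    linarith
  have hupper : ∀ i, (z i).re ≤ 1 := fun i => (Complex.re_le_norm _).trans (hz i)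
  have hlim : Tendsto (fun i => 2 * ‖(1 + z i) / 2‖ ^ 2 - 1) l (𝓝 1) := by
    convert ((h.pow 2).const_mul 2).sub_const 1 using 2
    norm_num
  exact tendsto_of_tendsto_of_tendsto_of_le_of_le hlim tendsto_const_nhds hlower hupper

theorem ContinuousLinearMap.norm_apply_le_one {𝕜 E F : Type*} [NontriviallyNormedField 𝕜]
    [SeminormedAddCommGroup E] [SeminormedAddCommGroup F] [NormedSpace 𝕜 E] [NormedSpace 𝕜 F]
    {f : E →L[𝕜] F} {x : E} (hf : ‖f‖ ≤ 1) (hx : ‖x‖ ≤ 1) : ‖f x‖ ≤ 1 :=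
  (f.le_opNorm x).trans (mul_le_one₀ hf (norm_nonneg x) hx)

theorem memAwsu_comp_apply {g : ℂ → Y} (hg : Differentiable ℂ g) (x : X) :
    MemAwsu (fun x' : StrongDual ℂ X => g (x' x)) :=
  ⟨(hg.continuous.comp (WeakDual.eval_continuous x)).continuousOn,
    (hg.comp (differentiable_id.clm_apply (differentiable_const x))).differentiableOn⟩

theorem supNorm_eq_of_forall_le_of_eq {Z : Type*} [NormedAddCommGroup Z]
    {f : StrongDual ℂ X → Z} {c : ℝ}
    (hle : ∀ x' ∈ closedBall (0 : StrongDual ℂ X) 1, ‖f x'‖ ≤ c)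
    {a : StrongDual ℂ X} (ha : a ∈ closedBall (0 : StrongDual ℂ X) 1) (hfa : ‖f a‖ = c) :
    supNorm f = c := by
  have : Nonempty (closedBall (0 : StrongDual ℂ X) 1) := ⟨⟨a, ha⟩⟩
  exact ciSup_eq_of_forall_le_of_forall_lt_exists_gt (fun x' => hle x' x'.2)
    fun w hw => ⟨⟨a, ha⟩, hfa ▸ hw⟩

theorem exposing_functional_gives_peak_function_general
    (X : Type*) [NormedAddCommGroup X] [NormedSpace ℂ X]
    (x₀ : X) (hx₀ : ‖x₀‖ = 1) (x₀' : StrongDual ℂ X) (hx₀' : ‖x₀'‖ = 1)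
    (hre : (x₀' x₀).re = 1)
    (hexp : ∀ x : ℕ → StrongDual ℂ X, (∀ n, ‖x n‖ ≤ 1) →
      Tendsto (fun n => ((x n) x₀).re) atTop (𝓝 1) →
      Tendsto (fun n => ‖x n - x₀'‖) atTop (𝓝 0)) :
    MemAwsu (fun x' : StrongDual ℂ X => (1 + x' x₀) / 2) ∧
    supNorm (fun x' : StrongDual ℂ X => (1 + x' x₀) / 2) = 1 ∧
    (1 + x₀' x₀) / 2 = 1 ∧
    ∀ x : ℕ → StrongDual ℂ X, (∀ n, ‖x n‖ ≤ 1) →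
      Tendsto (fun n => ‖(1 + (x n) x₀) / 2‖) atTop (𝓝 1) →
      Tendsto (fun n => ‖x n - x₀'‖) atTop (𝓝 0) := by
  have hball : ∀ x' : StrongDual ℂ X, ‖x'‖ ≤ 1 → ‖x' x₀‖ ≤ 1 := fun x' hx' =>
    ContinuousLinearMap.norm_apply_le_one hx' hx₀.le
  have hpeak : (1 + x₀' x₀) / 2 = 1 := by
    rw [Complex.eq_one_of_norm_le_one_of_re_eq_one (hball x₀' hx₀'.le) hre]
    norm_num
  refine ⟨memAwsu_comp_apply (g := fun z : ℂ => (1 + z) / 2) (by fun_prop) x₀, ?_, hpeak, ?_⟩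
  · refine supNorm_eq_of_forall_le_of_eq (fun x' hx' => ?_) (a := x₀') (by simp [hx₀'])
      (by simp [hpeak])
    exact Complex.norm_one_add_div_two_le_one (hball x' (by simpa using hx'))
  · intro x hx hnorm
    exact hexp x hx (Complex.tendsto_re_of_tendsto_norm_one_add_div_two
      (fun n => hball (x n) (hx n)) hnorm)

/-- If `x₀` weak-*-strongly exposes `x₀*`, then `f(x*) = (1 + x*(x₀))/2` belongs to
`A_{w*u}(B_{X*})`, has `‖f‖∞ = f(x₀*) = 1`, and is a strong peak function at `x₀*`
with respect to the norm. -/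
theorem exposing_functional_gives_peak_function
    (X : Type*) [NormedAddCommGroup X] [NormedSpace ℂ X] [CompleteSpace X]
    (x₀ : X) (hx₀ : ‖x₀‖ = 1) (x₀' : StrongDual ℂ X) (hx₀' : ‖x₀'‖ = 1)
    (hre : (x₀' x₀).re = 1)
    (hexp : ∀ x : ℕ → StrongDual ℂ X, (∀ n, ‖x n‖ ≤ 1) →
      Tendsto (fun n => ((x n) x₀).re) atTop (𝓝 1) →
      Tendsto (fun n => ‖x n - x₀'‖) atTop (𝓝 0)) :
    MemAwsu (fun x' : StrongDual ℂ X => (1 + x' x₀) / 2) ∧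
    supNorm (fun x' : StrongDual ℂ X => (1 + x' x₀) / 2) = 1 ∧
    (1 + x₀' x₀) / 2 = 1 ∧
    ∀ x : ℕ → StrongDual ℂ X, (∀ n, ‖x n‖ ≤ 1) →
      Tendsto (fun n => ‖(1 + (x n) x₀) / 2‖) atTop (𝓝 1) →
      Tendsto (fun n => ‖x n - x₀'‖) atTop (𝓝 0) :=
  exposing_functional_gives_peak_function_general X x₀ hx₀ x₀' hx₀' hre hexp
end
end
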